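/- Let ε ≥ 0, W > 0, and let f : 2^{[n]} → ℝ be a monotone submodular set function with f(∅) = 0. Let c : [n] → ℝ be item costs, let T* ⊆ [n] satisfy c(T*) := Σ_{j∈T*} c(j) ≤ W, set L = c(T*), and assume 1 ≤ c(j) ≤ L for every j ∈ [n] and Σ_{j∈[n]} c(j) > W. Let x_1, …, x_n be an ordering of [n] with prefixes G_0 = ∅, G_i = G_{i−1} ∪ {x_i}, which is a cost-benefit approximate greedy ordering: for every i and every y ∉ G_{i−1}, Δ(x_i|G_{i−1})/c(x_i) ≥ Δ(y|G_{i−1})/c(y) − 2ε. Let l be the largest index with c(G_l) ≤ W, and let x* ∈ [n] maximize f({x}) over all x with c(x) ≤ W. Then f(G_l) + f({x*}) ≥ (1 − 1/e)·f(T*) − 2Lε, and consequently max{f(G_l), f({x*})} ≥ (1/2 − 1/(2e))·f(T*) − Lε. -/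

import Mathlib

/-!
Write `r_m = f(T*) - f(G_m) - 2Lε`. Submodularity bounds `f(T*) - f(G_m)` by the marginal gains of
the items of `T* \ G_m`, and the approximate greedy rule bounds each of those by
`(Δ(x_m | G_m)/c(x_m) + 2ε) c(y)`; since `c(T*) = L` this gives `r_{m+1} ≤ (1 - c(x_m)/L) r_m`,
hence `r_m ≤ f(T*) exp(-c(G_m)/L)`. The first greedy prefix exceeding the budget has cost above
`W ≥ L`, so `f(G_{l+1}) ≥ (1 - 1/e) f(T*) - 2Lε`, and by submodularity
`f(G_{l+1}) ≤ f(G_l) + f({x_l}) ≤ f(G_l) + f({x*})`.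
-/

open Finset Real

section SetFunction

variable {α : Type*} [DecidableEq α] {f : Finset α → ℝ}

theorem sub_le_sum_marginal (hmono : Monotone f)
    (hsub : ∀ S T : Finset α, S ⊆ T → ∀ i ∉ T, f (insert i T) - f T ≤ f (insert i S) - f S)
    (S A : Finset α) :
    f (S ∪ A) - f S ≤ ∑ y ∈ A, (f (insert y S) - f S) := by
  induction A using Finset.induction_on with
  | empty => simp
  | insert a A ha ih =>
    rw [union_insert, sum_insert ha]
    have hgain : f (insert a (S ∪ A)) - f (S ∪ A) ≤ f (insert a S) - f S := by
      by_cases hmem : a ∈ S ∪ A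
      · rw [insert_eq_of_mem hmem, sub_self, sub_nonneg]
        exact hmono (subset_insert a S)
      · exact hsub S (S ∪ A) subset_union_left a hmem
    linarith

theorem greedy_gain_ge (hmono : Monotone f)
    (hsub : ∀ S T : Finset α, S ⊆ T → ∀ i ∉ T, f (insert i T) - f T ≤ f (insert i S) - f S)
    {c : α → ℝ} (hc : ∀ j, 0 < c j) {ε L : ℝ} (hε : 0 ≤ ε) (hL : 0 < L)
    {S T : Finset α} (hT : ∑ j ∈ T, c j ≤ L) {z : α}
    (hz : ∀ y ∉ S, (f (insert y S) - f S) / c y - 2 * ε ≤ (f (insert z S) - f S) / c z) :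
    c z / L * (f T - f S - 2 * L * ε) ≤ f (insert z S) - f S := by
  set ρ := (f (insert z S) - f S) / c z + 2 * ε
  have hρ : 0 ≤ ρ := by
    have : 0 ≤ f (insert z S) - f S := sub_nonneg.mpr (hmono (subset_insert z S))
    exact add_nonneg (div_nonneg this (hc z).le) (by linarith)
  have hgap : f T - f S ≤ ρ * L :=
    calc f T - f S ≤ f (S ∪ T \ S) - f S := by
          rw [union_sdiff_self_eq_union]
          exact sub_le_sub_right (hmono subset_union_right) _
      _ ≤ ∑ y ∈ T \ S, (f (insert y S) - f S) := sub_le_sum_marginal hmono hsub S (T \ S)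
      _ ≤ ∑ y ∈ T \ S, ρ * c y := by
          refine sum_le_sum fun y hy => ?_
          rw [← div_le_iff₀ (hc y)]
          linarith [hz y (mem_sdiff.mp hy).2]
      _ = ρ * ∑ y ∈ T \ S, c y := (mul_sum _ _ _).symm
      _ ≤ ρ * L := by
          refine mul_le_mul_of_nonneg_left (le_trans ?_ hT) hρ
          exact sum_le_sum_of_subset_of_nonneg sdiff_subset fun j _ _ => (hc j).le
  have hcz := hc z
  calc c z / L * (f T - f S - 2 * L * ε) ≤ c z / L * (L * (f (insert z S) - f S) / c z) := by
        refine mul_le_mul_of_nonneg_left ?_ (by positivity)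
        have : ρ * L = L * (f (insert z S) - f S) / c z + 2 * L * ε := by ring
        linarith
    _ = f (insert z S) - f S := by field_simp

end SetFunction

theorem le_mul_exp_of_le_one_sub_mul {r s : ℕ → ℝ} {B : ℝ} (hB : 0 ≤ B) (h0 : r 0 ≤ B) :
    ∀ m : ℕ, (∀ k < m, s (k + 1) - s k ≤ 1) →
      (∀ k < m, r (k + 1) ≤ (1 - (s (k + 1) - s k)) * r k) → r m ≤ B * exp (-(s m - s 0)) := by
  intro m
  induction m with
  | zero => intros; simpa using h0
  | succ m ih =>
    intro hs hr
    replace ih := ih (fun k hk => hs k (by omega)) (fun k hk => hr k (by omega))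
    have hstep := hr m m.lt_succ_self
    have hsplit : B * exp (-(s (m + 1) - s 0)) =
        B * exp (-(s m - s 0)) * exp (-(s (m + 1) - s m)) := by
      rw [mul_assoc, ← exp_add]; ring_nf
    rw [hsplit]
    rcases le_or_gt 0 (r m) with hrm | hrm
    · have hexp : 1 - (s (m + 1) - s m) ≤ exp (-(s (m + 1) - s m)) := by
        linarith [add_one_le_exp (-(s (m + 1) - s m))]
      calc r (m + 1) ≤ (1 - (s (m + 1) - s m)) * r m := hstep
        _ ≤ exp (-(s (m + 1) - s m)) * (B * exp (-(s m - s 0))) :=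
            mul_le_mul hexp ih hrm (exp_pos _).le
        _ = _ := mul_comm _ _
    · have : (1 - (s (m + 1) - s m)) * r m ≤ 0 :=
        mul_nonpos_of_nonneg_of_nonpos (by linarith [hs m m.lt_succ_self]) hrm.le
      have : 0 ≤ B * exp (-(s m - s 0)) * exp (-(s (m + 1) - s m)) := by positivity
      linarith

section Prefix

variable {α : Type*} [DecidableEq α] {n : ℕ} {x : Fin n → α} {G : ℕ → Finset α}

theorem mem_prefix_iff (hx : Function.Injective x) (hG0 : G 0 = ∅)
    (hGstep : ∀ i : Fin n, G ((i : ℕ) + 1) = insert (x i) (G (i : ℕ))) (i : Fin n) :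
    ∀ m : ℕ, m ≤ n → (x i ∈ G m ↔ (i : ℕ) < m) := by
  intro m
  induction m with
  | zero => simp [hG0]
  | succ m ih =>
    intro hm
    rw [show G (m + 1) = insert (x ⟨m, hm⟩) (G m) from hGstep ⟨m, hm⟩, mem_insert,
      ih (by omega), hx.eq_iff, Fin.ext_iff]
    simp only
    omega

theorem apply_notMem_prefix (hx : Function.Injective x) (hG0 : G 0 = ∅)
    (hGstep : ∀ i : Fin n, G ((i : ℕ) + 1) = insert (x i) (G (i : ℕ))) (i : Fin n) :
    x i ∉ G i :=
  (mem_prefix_iff hx hG0 hGstep i i i.isLt.le).not.mpr (lt_irrefl _)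

theorem prefix_eq_univ [Fintype α] (hx : Function.Bijective x) (hG0 : G 0 = ∅)
    (hGstep : ∀ i : Fin n, G ((i : ℕ) + 1) = insert (x i) (G (i : ℕ))) : G n = univ := by
  refine eq_univ_of_forall fun a => ?_
  obtain ⟨i, rfl⟩ := hx.surjective a
  exact (mem_prefix_iff hx.injective hG0 hGstep i n le_rfl).mpr i.isLt

theorem greedy_prefix_gap_le {f : Finset α → ℝ} (hmono : Monotone f)
    (hsub : ∀ S T : Finset α, S ⊆ T → ∀ i ∉ T, f (insert i T) - f T ≤ f (insert i S) - f S)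
    (hf0 : f ∅ = 0) {c : α → ℝ} (hc : ∀ j, 0 < c j) {ε L : ℝ} (hε : 0 ≤ ε) (hL : 0 < L)
    {T : Finset α} (hT : ∑ j ∈ T, c j ≤ L) (hcL : ∀ j, c j ≤ L)
    (hx : Function.Injective x) (hG0 : G 0 = ∅)
    (hGstep : ∀ i : Fin n, G ((i : ℕ) + 1) = insert (x i) (G (i : ℕ)))
    (hgreedy : ∀ i : Fin n, ∀ y, y ∉ G (i : ℕ) →
      (f (insert y (G (i : ℕ))) - f (G (i : ℕ))) / c y - 2 * ε ≤
        (f (insert (x i) (G (i : ℕ))) - f (G (i : ℕ))) / c (x i))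
    {m : ℕ} (hm : m ≤ n) :
    f T - f (G m) - 2 * L * ε ≤ f T * exp (-(∑ j ∈ G m, c j) / L) := by
  have hcost (k : ℕ) (hk : k < n) :
      (∑ j ∈ G (k + 1), c j) / L - (∑ j ∈ G k, c j) / L = c (x ⟨k, hk⟩) / L := by
    rw [hGstep ⟨k, hk⟩, sum_insert (apply_notMem_prefix hx hG0 hGstep ⟨k, hk⟩)]
    ring
  have hgain (k : ℕ) (hk : k < n) :
      c (x ⟨k, hk⟩) / L * (f T - f (G k) - 2 * L * ε) ≤ f (G (k + 1)) - f (G k) := by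
    rw [hGstep ⟨k, hk⟩]
    exact greedy_gain_ge hmono hsub hc hε hL hT (hgreedy ⟨k, hk⟩)
  have hT0 : 0 ≤ f T := hf0 ▸ hmono (empty_subset T)
  have hdecay := le_mul_exp_of_le_one_sub_mul (r := fun k => f T - f (G k) - 2 * L * ε)
    (s := fun k => (∑ j ∈ G k, c j) / L) hT0 (by simp only [hG0, hf0]; nlinarith) m
    (fun k hk => by rw [hcost k (by omega), div_le_one hL]; exact hcL _)
    (fun k hk => by rw [hcost k (by omega)]; linarith [hgain k (by omega)])
  simpa [hG0, neg_div] using hdecay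

end Prefix

theorem approx_greedy_submodular_knapsack_general
    (ε W : ℝ) (hε : 0 ≤ ε)
    (n : ℕ)
    (f : Finset (Fin n) → ℝ)
    (hmono : ∀ S T : Finset (Fin n), S ⊆ T → f S ≤ f T)
    (hsub : ∀ S T : Finset (Fin n), S ⊆ T → ∀ i ∉ T,
      f (insert i T) - f T ≤ f (insert i S) - f S)
    (hf0 : f ∅ = 0)
    (c : Fin n → ℝ)
    (Tstar : Finset (Fin n)) (hTstar : ∑ j ∈ Tstar, c j ≤ W)
    (L : ℝ) (hL : L = ∑ j ∈ Tstar, c j)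
    (hc1 : ∀ j : Fin n, 1 ≤ c j) (hcL : ∀ j : Fin n, c j ≤ L)
    (hctot : W < ∑ j : Fin n, c j)
    (x : Fin n → Fin n) (hx : Function.Bijective x)
    (G : ℕ → Finset (Fin n))
    (hG0 : G 0 = ∅)
    (hGstep : ∀ i : Fin n, G ((i : ℕ) + 1) = insert (x i) (G (i : ℕ)))
    (hgreedy : ∀ i : Fin n, ∀ y : Fin n, y ∉ G (i : ℕ) →
      (f (insert y (G (i : ℕ))) - f (G (i : ℕ))) / c y - 2 * ε ≤
        (f (insert (x i) (G (i : ℕ))) - f (G (i : ℕ))) / c (x i))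
    (l : ℕ) (hln : l ≤ n) (hlW : ∑ j ∈ G l, c j ≤ W)
    (hlmax : ∀ m : ℕ, m ≤ n → (∑ j ∈ G m, c j) ≤ W → m ≤ l)
    (xstar : Fin n)
    (hxstar : ∀ y : Fin n, c y ≤ W → f {y} ≤ f {xstar}) :
    f (G l) + f {xstar} ≥ (1 - 1 / Real.exp 1) * f Tstar - 2 * L * ε ∧
    max (f (G l)) (f {xstar}) ≥ (1 / 2 - 1 / (2 * Real.exp 1)) * f Tstar - L * ε := by
  have hLW : L ≤ W := hL ▸ hTstar
  have hc : ∀ j, 0 < c j := fun j => one_pos.trans_le (hc1 j)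
  have hl : l < n := by
    refine hln.lt_of_ne fun h => ?_
    rw [h, prefix_eq_univ hx hG0 hGstep] at hlW
    linarith
  have hL0 : 0 < L := by linarith [hc1 ⟨l, hl⟩, hcL ⟨l, hl⟩]
  have hoverW : W < ∑ j ∈ G (l + 1), c j := by
    by_contra! h
    have := hlmax (l + 1) hl h
    omega
  have hdecay := greedy_prefix_gap_le (fun S T h => hmono S T h) hsub hf0 hc hε hL0 hL.ge hcL
    hx.injective hG0 hGstep hgreedy hl
  have hexp : exp (-(∑ j ∈ G (l + 1), c j) / L) ≤ 1 / exp 1 := by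
    rw [one_div, ← exp_neg, exp_le_exp, neg_div, neg_le_neg_iff, le_div_iff₀ hL0]
    linarith
  have hlast : f (G (l + 1)) ≤ f (G l) + f {xstar} := by
    have hmarg : f (insert (x ⟨l, hl⟩) (G l)) - f (G l) ≤ f {x ⟨l, hl⟩} - f ∅ :=
      hsub ∅ (G l) (empty_subset _) _ (apply_notMem_prefix hx.injective hG0 hGstep ⟨l, hl⟩)
    rw [hGstep ⟨l, hl⟩]
    linarith [hxstar (x ⟨l, hl⟩) ((hcL _).trans hLW)]
  have hpart1 : f (G l) + f {xstar} ≥ (1 - 1 / exp 1) * f Tstar - 2 * L * ε := by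
    have hT0 : 0 ≤ f Tstar := hf0 ▸ hmono ∅ Tstar (empty_subset _)
    linarith [mul_le_mul_of_nonneg_left hexp hT0]
  refine ⟨hpart1, ?_⟩
  rw [show 1 / (2 * exp 1) = 1 / exp 1 / 2 by ring]
  linarith [le_max_left (f (G l)) (f {xstar}), le_max_right (f (G l)) (f {xstar})]

/-- Guarantee of the modified (cost-benefit) greedy algorithm for
monotone submodular maximization under a knapsack constraint, with a `2ε`-approximate
benefit-per-cost greedy ordering. -/
theorem approx_greedy_submodular_knapsack
    (ε W : ℝ) (hε : 0 ≤ ε) (hW : 0 < W)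
    (n : ℕ)
    (f : Finset (Fin n) → ℝ)
    (hmono : ∀ S T : Finset (Fin n), S ⊆ T → f S ≤ f T)
    (hsub : ∀ S T : Finset (Fin n), S ⊆ T → ∀ i ∉ T,
      f (insert i T) - f T ≤ f (insert i S) - f S)
    (hf0 : f ∅ = 0)
    (c : Fin n → ℝ)
    (Tstar : Finset (Fin n)) (hTstar : ∑ j ∈ Tstar, c j ≤ W)
    (L : ℝ) (hL : L = ∑ j ∈ Tstar, c j)
    (hc1 : ∀ j : Fin n, 1 ≤ c j) (hcL : ∀ j : Fin n, c j ≤ L)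
    (hctot : W < ∑ j : Fin n, c j)
    (x : Fin n → Fin n) (hx : Function.Bijective x)
    (G : ℕ → Finset (Fin n))
    (hG0 : G 0 = ∅)
    (hGstep : ∀ i : Fin n, G ((i : ℕ) + 1) = insert (x i) (G (i : ℕ)))
    (hgreedy : ∀ i : Fin n, ∀ y : Fin n, y ∉ G (i : ℕ) →
      (f (insert y (G (i : ℕ))) - f (G (i : ℕ))) / c y - 2 * ε ≤
        (f (insert (x i) (G (i : ℕ))) - f (G (i : ℕ))) / c (x i))
    (l : ℕ) (hln : l ≤ n) (hlW : ∑ j ∈ G l, c j ≤ W)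
    (hlmax : ∀ m : ℕ, m ≤ n → (∑ j ∈ G m, c j) ≤ W → m ≤ l)
    (xstar : Fin n) (hxstarW : c xstar ≤ W)
    (hxstar : ∀ y : Fin n, c y ≤ W → f {y} ≤ f {xstar}) :
    f (G l) + f {xstar} ≥ (1 - 1 / Real.exp 1) * f Tstar - 2 * L * ε ∧
    max (f (G l)) (f {xstar}) ≥ (1 / 2 - 1 / (2 * Real.exp 1)) * f Tstar - L * ε :=
  approx_greedy_submodular_knapsack_general ε W hε n f hmono hsub hf0 c Tstar hTstar L hL hc1 hcL
    hctot x hx G hG0 hGstep hgreedy l hln hlW hlmax xstar hxstar
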